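/- (Theorem 4.3: Monotonically decreasing profit-rate path.) Let T > 0 and β > 0. Let λ, G, k : ℝ → ℝ satisfy: for every t ∈ [0, T], λ(t) > 0, G(t) < 0, k(t) > 0, and λ has derivative G(t)·(1 - β·k(t)) at t; and k is continuous on [0, T]. Let k_min = inf { k(t) : t ∈ [0, T] } and suppose β·k_min > 1 (i.e., β > β_max = 1/k_min). Define r(t) = 1/λ(t) - 1. Then r is strictly monotonically decreasing on [0, T]: for all 0 ≤ s < t ≤ T, r(s) > r(t). -/

import Mathlib

/-!
Since `β · k_min > 1`, the factor `1 - β k(t)` is negative on all of `[0, T]`, so together with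
`G < 0` the derivative of `λ` is positive there. Hence `λ` is strictly increasing, and since it is
positive, `r = 1/λ - 1` is strictly decreasing.
-/

open Set

lemma lt_mul_of_lt_mul_csInf {S : Set ℝ} (hS : BddBelow S) {a c x : ℝ} (hc : 0 ≤ c)
    (h : a < c * sInf S) (hx : x ∈ S) : a < c * x :=
  h.trans_le (mul_le_mul_of_nonneg_left (csInf_le hS hx) hc)

lemma strictMonoOn_Icc_of_hasDerivAt_pos {f f' : ℝ → ℝ} {a b : ℝ}
    (hf : ∀ t ∈ Icc a b, HasDerivAt f (f' t) t) (hpos : ∀ t ∈ Ioo a b, 0 < f' t) :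
    StrictMonoOn f (Icc a b) :=
  strictMonoOn_of_hasDerivWithinAt_pos (convex_Icc a b)
    (fun t ht => (hf t ht).continuousAt.continuousWithinAt)
    (fun t ht => by
      rw [interior_Icc] at ht
      exact (hf t (Ioo_subset_Icc_self ht)).hasDerivWithinAt)
    (fun t ht => by
      rw [interior_Icc] at ht
      exact hpos t ht)

theorem stmt_13_general (T β : ℝ) (hβ : 0 < β) (lam G k : ℝ → ℝ)
    (hdyn : ∀ t ∈ Set.Icc (0 : ℝ) T,
      0 < lam t ∧ G t < 0 ∧ 0 < k t ∧
        HasDerivAt lam (G t * (1 - β * k t)) t)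
    (hk : ContinuousOn k (Set.Icc (0 : ℝ) T))
    (hmin : 1 < β * sInf (k '' Set.Icc (0 : ℝ) T)) :
    ∀ s ∈ Set.Icc (0 : ℝ) T, ∀ t ∈ Set.Icc (0 : ℝ) T, s < t →
      1 / lam t - 1 < 1 / lam s - 1 := by
  have hβk : ∀ t ∈ Icc 0 T, 1 < β * k t := fun t ht =>
    lt_mul_of_lt_mul_csInf (isCompact_Icc.image_of_continuousOn hk).bddBelow hβ.le hmin
      ⟨t, ht, rfl⟩
  have hlam : StrictMonoOn lam (Icc 0 T) := by
    refine strictMonoOn_Icc_of_hasDerivAt_pos (fun t ht => (hdyn t ht).2.2.2) fun t ht => ?_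
    have ht' : t ∈ Icc 0 T := Ioo_subset_Icc_self ht
    exact mul_pos_of_neg_of_neg (hdyn t ht').2.1 (by linarith [hβk t ht'])
  intro s hs t ht hst
  exact sub_lt_sub_right (one_div_lt_one_div_of_lt (hdyn s hs).1 (hlam hs ht hst)) 1

/-- Theorem 4.3, monotonically decreasing profit-rate path:
if on `[0, T]` the spectral radius `λ` is positive with derivative
`G(t)·(1 - β·k(t))`, the technology effect satisfies `G < 0`, `k > 0` is
continuous, and `β · k_min > 1` where `k_min = inf k([0, T])`, then the profit
rate `r(t) = 1/λ(t) - 1` is strictly decreasing on `[0, T]`. -/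
theorem stmt_13 (T β : ℝ) (hT : 0 < T) (hβ : 0 < β) (lam G k : ℝ → ℝ)
    (hdyn : ∀ t ∈ Set.Icc (0 : ℝ) T,
      0 < lam t ∧ G t < 0 ∧ 0 < k t ∧
        HasDerivAt lam (G t * (1 - β * k t)) t)
    (hk : ContinuousOn k (Set.Icc (0 : ℝ) T))
    (hmin : 1 < β * sInf (k '' Set.Icc (0 : ℝ) T)) :
    ∀ s ∈ Set.Icc (0 : ℝ) T, ∀ t ∈ Set.Icc (0 : ℝ) T, s < t →
      1 / lam t - 1 < 1 / lam s - 1 :=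
  stmt_13_general T β hβ lam G k hdyn hk hmin
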